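/- A finite totally ordered effect algebra with n elements is generated by a single element; i.e., there is an element e such that every nonzero element equals an iterated sum e ⊕ e ⊕ ⋯ ⊕ e. -/

import Mathlib

/-- An effect algebra: a set with `zero`, `one`, a partial commutative associative
sum (modelled as an `Option`-valued operation), unique complements, and
`e ⊕ 1` defined only for `e = 0`. -/
structure EffectAlgebra (E : Type*) where
  zero : E
  one : E
  add : E → E → Option E
  comm : ∀ e f, add e f = add f e
  assoc : ∀ e f g, (add e f).bind (fun s => add s g) = (add f g).bind (fun s => add e s)
  compl : E → E
  add_compl : ∀ e, add e (compl e) = some one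
  compl_unique : ∀ e f, add e f = some one → f = compl e
  one_max : ∀ e f, add e one = some f → e = zero

namespace EffectAlgebra

variable {E : Type*}

/-- Intrinsic order: `e ≤ f` iff `f = e ⊕ g` for some `g`. -/
def le (A : EffectAlgebra E) (e f : E) : Prop := ∃ g, A.add e g = some f

/-- Iterated sum `e ⊕ e ⊕ ⋯ ⊕ e` (`n` copies), when defined. -/
def nsum (A : EffectAlgebra E) (e : E) : ℕ → Option E
  | 0 => some A.zero
  | n + 1 => (nsum A e n).bind (fun s => A.add e s)

end EffectAlgebra

/-- The underlying set `{k/(n-1) : 0 ≤ k ≤ n-1}` of the scale effect algebra `S_n`. -/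
def scaleSet (n : ℕ) : Set ℝ := {x | ∃ k : ℕ, k ≤ n - 1 ∧ x = (k : ℝ) / ((n : ℝ) - 1)}

/-!
The intrinsic order of an effect algebra is a partial order (antisymmetry comes from
cancellativity and the fact that `a ⊕ b = 0` forces `b = 0`), hence well founded on a finite
effect algebra. A totally ordered one therefore has a least nonzero element `e`. Every nonzero
`f` is `e ⊕ g` with `g` strictly below `f`, so well-founded induction writes `f` as `e ⊕ ⋯ ⊕ e`.
-/

namespace EffectAlgebra

variable {E : Type*} (A : EffectAlgebra E)

lemma compl_one : A.compl A.one = A.zero :=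
  A.one_max _ _ (by rw [A.comm]; exact A.add_compl A.one)

lemma one_add_zero : A.add A.one A.zero = some A.one := by
  simpa only [compl_one] using A.add_compl A.one

lemma compl_compl (e : E) : A.compl (A.compl e) = e :=
  (A.compl_unique _ _ (by rw [A.comm]; exact A.add_compl e)).symm

lemma compl_add_zero (e : E) : A.add (A.compl e) A.zero = some (A.compl e) := by
  have h := A.assoc e (A.compl e) A.zero
  rw [A.add_compl e, Option.bind_some, one_add_zero] at h
  obtain ⟨s, hs, hes⟩ := Option.bind_eq_some_iff.mp h.symm
  rw [hs, A.compl_unique _ _ hes]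

lemma add_zero (e : E) : A.add e A.zero = some e := by
  simpa only [compl_compl] using A.compl_add_zero (A.compl e)

lemma exists_eq_compl_of_add_eq {a x d : E} (h : A.add a x = some d) :
    ∃ u, A.add (A.compl d) a = some u ∧ x = A.compl u := by
  have h₁ := A.assoc a x (A.compl d)
  rw [h, Option.bind_some, A.add_compl d] at h₁
  obtain ⟨t, ht, hat⟩ := Option.bind_eq_some_iff.mp h₁.symm
  have h₂ := A.assoc x (A.compl d) a
  rw [ht, Option.bind_some, A.comm t a, hat] at h₂
  obtain ⟨u, hu, hxu⟩ := Option.bind_eq_some_iff.mp h₂.symm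
  exact ⟨u, hu, A.compl_unique _ _ (by rw [A.comm]; exact hxu)⟩

lemma add_left_cancel {a b c d : E} (hb : A.add a b = some d) (hc : A.add a c = some d) :
    b = c := by
  obtain ⟨u, hu, rfl⟩ := A.exists_eq_compl_of_add_eq hb
  obtain ⟨v, hv, rfl⟩ := A.exists_eq_compl_of_add_eq hc
  rw [Option.some.inj (hu.symm.trans hv)]

lemma eq_zero_of_add_eq_self {a b : E} (h : A.add a b = some a) : b = A.zero :=
  A.add_left_cancel h (A.add_zero a)

lemma eq_zero_of_add_eq_zero {a b : E} (h : A.add a b = some A.zero) : b = A.zero := by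
  have h₁ := A.assoc a b A.one
  rw [h, Option.bind_some, A.comm A.zero A.one, one_add_zero] at h₁
  obtain ⟨t, ht, -⟩ := Option.bind_eq_some_iff.mp h₁.symm
  exact A.one_max b t ht

lemma le_refl (e : E) : A.le e e := ⟨A.zero, A.add_zero e⟩

lemma le_trans {a b c : E} (hab : A.le a b) (hbc : A.le b c) : A.le a c := by
  obtain ⟨g, hg⟩ := hab
  obtain ⟨h, hh⟩ := hbc
  have h₁ := A.assoc a g h
  rw [hg, Option.bind_some, hh] at h₁
  obtain ⟨s, -, has⟩ := Option.bind_eq_some_iff.mp h₁.symm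
  exact ⟨s, has⟩

lemma le_antisymm {a b : E} (hab : A.le a b) (hba : A.le b a) : a = b := by
  obtain ⟨g, hg⟩ := hab
  obtain ⟨h, hh⟩ := hba
  have h₁ := A.assoc a g h
  rw [hg, Option.bind_some, hh] at h₁
  obtain ⟨s, hs, has⟩ := Option.bind_eq_some_iff.mp h₁.symm
  rw [A.eq_zero_of_add_eq_self has, A.comm] at hs
  rw [A.eq_zero_of_add_eq_zero hs, A.add_zero] at hg
  exact Option.some.inj hg

def lt (a b : E) : Prop := A.le a b ∧ a ≠ b

lemma wellFounded_lt [Finite E] : WellFounded A.lt :=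
  @Finite.wellFounded_of_trans_of_irrefl _ _ A.lt
    ⟨fun _ _ _ hab hbc =>
      ⟨A.le_trans hab.1 hbc.1, fun h => hbc.2 (A.le_antisymm hbc.1 (h ▸ hab.1))⟩⟩
    ⟨fun _ h => h.2 rfl⟩

lemma exists_ne_zero_forall_le [Finite E] (htot : ∀ a b : E, A.le a b ∨ A.le b a)
    {f₀ : E} (hf₀ : f₀ ≠ A.zero) : ∃ e ≠ A.zero, ∀ f ≠ A.zero, A.le e f := by
  obtain ⟨e, he, hmin⟩ := A.wellFounded_lt.has_min {f | f ≠ A.zero} ⟨f₀, hf₀⟩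
  refine ⟨e, he, fun f hf => (htot e f).elim id fun hfe => ?_⟩
  by_cases hfe' : f = e
  · exact hfe' ▸ A.le_refl f
  · exact absurd ⟨hfe, hfe'⟩ (hmin f hf)

lemma exists_nsum_eq_of_forall_le [Finite E] {e : E} (he : e ≠ A.zero)
    (hle : ∀ f ≠ A.zero, A.le e f) :
    ∀ f ≠ A.zero, ∃ n, 1 ≤ n ∧ A.nsum e n = some f := by
  intro f
  induction f using A.wellFounded_lt.induction with
  | _ f ih =>
  intro hf
  obtain ⟨g, hg⟩ := hle f hf
  by_cases hg₀ : g = A.zero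
  · subst hg₀
    exact ⟨1, le_rfl, by simpa [nsum] using hg⟩
  have hgf : A.lt g f := by
    refine ⟨⟨e, by rw [A.comm]; exact hg⟩, fun hgf => he ?_⟩
    subst hgf
    exact A.eq_zero_of_add_eq_self (by rw [A.comm]; exact hg)
  obtain ⟨n, -, hn⟩ := ih g hgf hg₀
  exact ⟨n + 1, by omega, by simp [nsum, hn, hg]⟩

end EffectAlgebra

theorem totallyOrdered_singly_generated {E : Type*} [Fintype E] (A : EffectAlgebra E)
    (htot : ∀ a b : E, A.le a b ∨ A.le b a) :
    ∃ e : E, ∀ f : E, f ≠ A.zero → ∃ n : ℕ, 1 ≤ n ∧ EffectAlgebra.nsum A e n = some f := by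
  by_cases h : ∀ f, f = A.zero
  · exact ⟨A.zero, fun f hf => absurd (h f) hf⟩
  obtain ⟨f₀, hf₀⟩ := not_forall.mp h
  obtain ⟨e, he, hle⟩ := A.exists_ne_zero_forall_le htot hf₀
  exact ⟨e, A.exists_nsum_eq_of_forall_le he hle⟩
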